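/- Let R be a ring that is a finitely generated free module of rank r over its center C, and let α ∈ C be nonzero. Then R/Rα is a free module of rank r over C/Cα. Moreover, if Rα is a maximal twosided ideal of R, then C/Cα is a (commutative) field. -/

import Mathlib

/-- An Ore extension `R = D[X;σ,δ]`: `R` is a ring containing `D` via `C`, with a
distinguished element `X`, which is a free left `D`-module on the powers of `X`
(encoded by the coefficient equivalence `e`), subject to `X·a = σ(a)·X + δ(a)`,
where `δ` is a `σ`-derivation. -/
structure OreExt (D : Type*) [DivisionRing D] (σ : D ≃+* D) (δ : D → D)
    (R : Type*) [Ring R] where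
  C : D →+* R
  X : R
  e : R ≃+ (ℕ →₀ D)
  e_symm_single : ∀ (n : ℕ) (d : D), e.symm (Finsupp.single n d) = C d * X ^ n
  X_mul_C : ∀ a : D, X * C a = C (σ a) * X + C (δ a)
  δ_add : ∀ a b : D, δ (a + b) = δ a + δ b
  δ_mul : ∀ a b : D, δ (a * b) = σ a * δ b + δ a * b

namespace OreExt

variable {D R : Type*} [DivisionRing D] [Ring R] {σ : D ≃+* D} {δ : D → D}

/-- Degree, with `deg 0 = ⊥` (i.e. `-∞`). -/
noncomputable def deg (O : OreExt D σ δ R) (f : R) : WithBot ℕ := (O.e f).support.max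

/-- Degree as a natural number (`0` for the zero polynomial). -/
noncomputable def ndeg (O : OreExt D σ δ R) (f : R) : ℕ := ((O.e f).support.max).unbotD 0

/-- Leading coefficient. -/
noncomputable def lc (O : OreExt D σ δ R) (f : R) : D := O.e f (O.ndeg f)

/-- `f` is irreducible: it has positive degree and in any factorization one of the two
factors is a constant (an element of `D`). -/
def IrreducibleOre (O : OreExt D σ δ R) (f : R) : Prop :=
  0 < O.ndeg f ∧ ∀ g h : R, f = g * h → (∃ d : D, g = O.C d) ∨ (∃ d : D, h = O.C d)

end OreExt

/-- A left ideal is twosided. -/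
def IsTwoSidedIdeal' {R : Type*} [Ring R] (I : Ideal R) : Prop :=
  ∀ x ∈ I, ∀ r : R, x * r ∈ I

/-- `b` is a bound of `f`: the left ideal `Rb` is twosided and is the largest twosided
ideal contained in `Rf`. -/
def IsBound {R : Type*} [Ring R] (f b : R) : Prop :=
  Ideal.span {b} ≤ Ideal.span {f} ∧ IsTwoSidedIdeal' (Ideal.span {b}) ∧
    ∀ J : Ideal R, IsTwoSidedIdeal' J → J ≤ Ideal.span {f} → J ≤ Ideal.span {b}

/-!
The centre `C` is a direct summand of `R`: if `b` is a basis and `bᵢ` one of its members,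
`x ↦ (coefficient of bᵢ in bᵢ x)` is a `C`-linear retraction of `C → R`. Hence every ideal `I`
of `C` is the contraction of the left ideal `RI`, which is twosided because `I` is central; in
particular `Rα ∩ C = Cα`. Coefficients of elements of `Rα` in the basis lie in `Cα`, so the basis
stays free modulo `α`, and ideals strictly between `Cα` and `C` would extend to twosided ideals
strictly between `Rα` and `R`.
-/

section

variable {C R : Type*} [CommRing C] [Ring R] [Algebra C R]

lemma exists_retraction_of_basis [Nontrivial R] {ι : Type*} (b : Module.Basis ι C R) :
    ∃ φ : R →ₗ[C] C, φ 1 = 1 := by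
  obtain ⟨i⟩ := b.index_nonempty
  exact ⟨b.coord i ∘ₗ LinearMap.mulLeft C (b i), by simp⟩

lemma Ideal.comap_map_algebraMap_of_retraction (φ : R →ₗ[C] C) (hφ : φ 1 = 1) (I : Ideal C) :
    (I.map (algebraMap C R)).comap (algebraMap C R) = I := by
  refine le_antisymm (fun a ha => ?_) Ideal.le_comap_map
  have hφ_alg : ∀ a : C, φ (algebraMap C R a) = a := fun a => by
    rw [Algebra.algebraMap_eq_smul_one, map_smul, hφ, smul_eq_mul, mul_one]
  suffices h : ∀ y ∈ I.map (algebraMap C R), ∀ r : R, φ (r * y) ∈ I by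
    simpa [hφ_alg] using h _ ha 1
  intro y hy
  induction hy using Submodule.span_induction with
  | mem y hy =>
    obtain ⟨a, ha, rfl⟩ := hy
    intro r
    rw [← Algebra.commutes, ← Algebra.smul_def, map_smul, smul_eq_mul]
    exact I.mul_mem_right _ ha
  | zero => simp
  | add y z _ _ hy hz => intro r; rw [mul_add, map_add]; exact I.add_mem (hy r) (hz r)
  | smul s y _ hy => intro r; rw [smul_eq_mul, ← mul_assoc]; exact hy (r * s)

lemma isTwoSidedIdeal'_map_algebraMap (I : Ideal C) :
    IsTwoSidedIdeal' (I.map (algebraMap C R)) := by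
  intro x hx
  induction hx using Submodule.span_induction with
  | mem y hy =>
    obtain ⟨a, ha, rfl⟩ := hy
    intro r
    rw [Algebra.commutes]
    exact Ideal.mul_mem_left _ _ (Ideal.mem_map_of_mem _ ha)
  | zero => simp
  | add y z _ _ hy hz => intro r; rw [add_mul]; exact Ideal.add_mem _ (hy r) (hz r)
  | smul s y _ hy => intro r; rw [smul_eq_mul, mul_assoc]; exact Ideal.mul_mem_left _ _ (hy r)

lemma Module.Basis.repr_mem_span_of_mem_span_algebraMap {ι : Type*} (b : Module.Basis ι C R)
    {α : C} {x : R} (hx : x ∈ Ideal.span {algebraMap C R α}) (i : ι) :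
    b.repr x i ∈ Ideal.span {α} := by
  obtain ⟨y, rfl⟩ := Ideal.mem_span_singleton'.mp hx
  rw [← Algebra.commutes, ← Algebra.smul_def, map_smul, Finsupp.smul_apply, smul_eq_mul]
  exact Ideal.mul_mem_right _ _ (Ideal.mem_span_singleton_self α)

lemma Ideal.isMaximal_of_map_maximal_twoSided (φ : R →ₗ[C] C) (hφ : φ 1 = 1) (I : Ideal C)
    (hne : I.map (algebraMap C R) ≠ ⊤)
    (hmax : ∀ J : Ideal R, IsTwoSidedIdeal' J → I.map (algebraMap C R) < J → J = ⊤) :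
    I.IsMaximal := by
  have hcomap := Ideal.comap_map_algebraMap_of_retraction φ hφ
  refine ⟨⟨fun hI => hne (by rw [hI, Ideal.map_top]), fun K hK => ?_⟩⟩
  have hmapK : K.map (algebraMap C R) = ⊤ := by
    refine hmax _ (isTwoSidedIdeal'_map_algebraMap K) (lt_of_le_of_ne (Ideal.map_mono hK.le) ?_)
    intro h
    exact hK.ne (by rw [← hcomap I, h, hcomap K])
  rw [← hcomap K, hmapK, Ideal.comap_top]

end

theorem quotient_free_of_free_general {R : Type*} [Ring R] (r : ℕ)
    (bas : Module.Basis (Fin r) (Subring.center R) R)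
    (α : Subring.center R) :
    (∃ v : Fin r → R,
      (∀ x : R, ∃ c : Fin r → Subring.center R,
        x - ∑ i, (c i : R) * v i ∈ Ideal.span {(α : R)}) ∧
      (∀ c : Fin r → Subring.center R,
        (∑ i, (c i : R) * v i) ∈ Ideal.span {(α : R)} →
          ∀ i, c i ∈ Ideal.span {α})) ∧
    (((Ideal.span {(α : R)} : Ideal R) ≠ ⊤ ∧
        ∀ J : Ideal R, IsTwoSidedIdeal' J → Ideal.span {(α : R)} < J → J = ⊤) →
      IsField (Subring.center R ⧸ (Ideal.span {α} : Ideal (Subring.center R)))) := by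
  have hsmul (c : Fin r → Subring.center R) : ∑ i, (c i : R) * bas i = ∑ i, c i • bas i := rfl
  refine ⟨⟨bas, fun x => ⟨bas.repr x, ?_⟩, fun c hc i => ?_⟩, fun ⟨hne, hmax⟩ => ?_⟩
  · rw [hsmul, bas.sum_repr, sub_self]
    exact zero_mem _
  · rw [hsmul] at hc
    have := bas.repr_mem_span_of_mem_span_algebraMap hc i
    rwa [bas.repr_sum_self] at this
  · have : Nontrivial R := by
      by_contra h
      rw [not_nontrivial_iff_subsingleton] at h
      exact hne (Subsingleton.elim _ _)
    obtain ⟨φ, hφ⟩ := exists_retraction_of_basis bas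
    have hspan : Ideal.span {(α : R)} = (Ideal.span {α}).map (algebraMap _ R) := by
      rw [Ideal.map_span, Set.image_singleton]
      rfl
    rw [hspan] at hne hmax
    exact (Ideal.Quotient.maximal_ideal_iff_isField_quotient _).mp
      (Ideal.isMaximal_of_map_maximal_twoSided φ hφ _ hne hmax)

/-- if `R` is a free module of rank `r` over its center `C` and
`α ∈ C` is nonzero, then `R/Rα` is free of rank `r` over `C/Cα` (encoded: there are
`r` elements whose classes span `R/Rα` over `C` and are independent modulo `Cα`);
moreover if `Rα` is a maximal twosided ideal then `C/Cα` is a field. -/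
theorem quotient_free_of_free {R : Type*} [Ring R] (r : ℕ)
    (bas : Module.Basis (Fin r) (Subring.center R) R)
    (α : Subring.center R) (hα : α ≠ 0) :
    (∃ v : Fin r → R,
      (∀ x : R, ∃ c : Fin r → Subring.center R,
        x - ∑ i, (c i : R) * v i ∈ Ideal.span {(α : R)}) ∧
      (∀ c : Fin r → Subring.center R,
        (∑ i, (c i : R) * v i) ∈ Ideal.span {(α : R)} →
          ∀ i, c i ∈ Ideal.span {α})) ∧
    (((Ideal.span {(α : R)} : Ideal R) ≠ ⊤ ∧
        ∀ J : Ideal R, IsTwoSidedIdeal' J → Ideal.span {(α : R)} < J → J = ⊤) →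
      IsField (Subring.center R ⧸ (Ideal.span {α} : Ideal (Subring.center R)))) :=
  quotient_free_of_free_general r bas α
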